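/- (Noise calibration makes the privacy-loss tail at most δ) Let ε > 0, δ ∈ (0, 1), Δ > 0, and suppose σ ≥ Δ·√(2·ln(1.25/δ)) / ε. Then exp( −(1/2) · ( εσ/Δ + Δ/(2σ) )² ) ≤ δ. Consequently, for a standard Gaussian Z, the probability that (Δ/σ)·Z − Δ²/(2σ²) > ε is at most δ. -/
import Mathlib

open MeasureTheory ProbabilityTheory

lemma gaussian_tail_le (t : ℝ) (ht : 0 < t) :
    gaussianReal 0 1 (Set.Ioi t) ≤
      ENNReal.ofReal ((Real.sqrt (2 * Real.pi))⁻¹ * (Real.exp (-(t ^ 2) / 2) / t)) := by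
  rw [gaussianReal_apply_eq_integral 0 one_ne_zero]
  apply ENNReal.ofReal_le_ofReal
  have hpdf : ∀ x : ℝ, gaussianPDFReal 0 1 x = (Real.sqrt (2 * Real.pi))⁻¹ *
      Real.exp (-(x ^ 2) / 2) := by
    intro x
    simp [gaussianPDFReal]
  have hint2 : IntegrableOn (fun x : ℝ => (Real.sqrt (2 * Real.pi))⁻¹ *
      (Real.exp (t ^ 2 / 2) * Real.exp (-(t * x)))) (Set.Ioi t) := by
    have := (exp_neg_integrableOn_Ioi t ht)
    simp_rw [neg_mul] at this
    exact (this.const_mul _).const_mul _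
  have key : ∫ x in Set.Ioi t, gaussianPDFReal 0 1 x ≤
      ∫ x in Set.Ioi t, (Real.sqrt (2 * Real.pi))⁻¹ *
        (Real.exp (t ^ 2 / 2) * Real.exp (-(t * x))) := by
    refine setIntegral_mono_on ((integrable_gaussianPDFReal 0 1).integrableOn) hint2
      measurableSet_Ioi ?_
    intro x _
    rw [hpdf x, ← Real.exp_add]
    refine mul_le_mul_of_nonneg_left ?_ (by positivity)
    exact Real.exp_le_exp.mpr (by nlinarith [sq_nonneg (x - t)])
  refine key.trans_eq ?_
  rw [integral_const_mul, integral_const_mul]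
  have : ∫ x in Set.Ioi t, Real.exp (-(t * x)) = t⁻¹ * Real.exp (-(t * t)) := by
    have h := integral_comp_mul_left_Ioi (fun x => Real.exp (-x)) t ht
    simp only [smul_eq_mul] at h
    rw [h, integral_exp_neg_Ioi]
  rw [this]
  have h2 : Real.exp (t ^ 2 / 2) * Real.exp (-(t * t)) = Real.exp (-t ^ 2 / 2) := by
    rw [← Real.exp_add]; ring_nf
  rw [div_eq_mul_inv, ← h2]; ring

/-- Noise calibration: if `σ ≥ Δ·√(2 ln(1.25/δ))/ε` then the privacy-loss tail bound
`exp(−(1/2)(εσ/Δ + Δ/(2σ))²)` is at most `δ`, and consequently the probability that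
`(Δ/σ)·Z − Δ²/(2σ²) > ε` for a standard Gaussian `Z` is at most `δ`. -/
theorem noise_calibration (ε δ Δ σ : ℝ) (hε : 0 < ε) (hδ0 : 0 < δ) (hδ1 : δ < 1)
    (hΔ : 0 < Δ) (hσ : Δ * Real.sqrt (2 * Real.log (1.25 / δ)) / ε ≤ σ) :
    Real.exp (-(1 / 2) * (ε * σ / Δ + Δ / (2 * σ)) ^ 2) ≤ δ ∧
    gaussianReal 0 1 {z : ℝ | ε < (Δ / σ) * z - Δ ^ 2 / (2 * σ ^ 2)} ≤
      ENNReal.ofReal δ := by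
  set L := Real.log (1.25 / δ) with hLdef
  -- basic positivity facts
  have hlog125 : (0.2 : ℝ) ≤ Real.log 1.25 := by
    rw [Real.le_log_iff_exp_le (by norm_num)]
    have h1 : (0.8 : ℝ) ≤ Real.exp (-0.2) := by
      have := Real.add_one_le_exp (-0.2 : ℝ); linarith
    have : Real.exp (0.2 : ℝ) = (Real.exp (-0.2 : ℝ))⁻¹ := by
      rw [← Real.exp_neg]; norm_num
    rw [this]
    calc (Real.exp (-0.2 : ℝ))⁻¹ ≤ (0.8 : ℝ)⁻¹ := by
          apply inv_anti₀ (by norm_num) h1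
      _ = 1.25 := by norm_num
  have hLlog : Real.log 1.25 ≤ L := by
    rw [hLdef]
    apply Real.log_le_log (by norm_num)
    rw [le_div_iff₀ hδ0]
    nlinarith
  have hL : (0.2 : ℝ) ≤ L := hlog125.trans hLlog
  have hL0 : 0 < L := by linarith
  have hσ0 : 0 < σ := lt_of_lt_of_le (by positivity) hσ
  set t := ε * σ / Δ + Δ / (2 * σ) with htdef
  have ha : Real.sqrt (2 * L) ≤ ε * σ / Δ := by
    rw [div_le_iff₀ hε] at hσ
    rw [le_div_iff₀ hΔ]
    linarith
  have ht : Real.sqrt (2 * L) ≤ t := by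
    have : 0 < Δ / (2 * σ) := by positivity
    rw [htdef]; linarith
  have ht0 : 0 < t := lt_of_lt_of_le (Real.sqrt_pos.mpr (by linarith)) ht
  have htsq : 2 * L ≤ t ^ 2 := by
    have := Real.sq_sqrt (by linarith : (0:ℝ) ≤ 2 * L)
    nlinarith [Real.sqrt_nonneg (2 * L)]
  have hLδ : -Real.log δ ≤ L := by
    rw [hLdef, Real.log_div (by norm_num) hδ0.ne']
    have : (0:ℝ) ≤ Real.log 1.25 := by linarith
    linarith
  have part1 : Real.exp (-(1 / 2) * t ^ 2) ≤ δ := by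
    rw [← Real.exp_log hδ0]
    apply Real.exp_le_exp.mpr
    clear_value L t
    linarith
  refine ⟨part1, ?_⟩
  -- identify the event with a tail set
  have hset : {z : ℝ | ε < (Δ / σ) * z - Δ ^ 2 / (2 * σ ^ 2)} = Set.Ioi t := by
    have hq : 0 < Δ / σ := by positivity
    have hid : ∀ z : ℝ, (Δ / σ) * z - Δ ^ 2 / (2 * σ ^ 2) - ε = (Δ / σ) * (z - t) := by
      intro z; rw [htdef]; field_simp; ring
    ext z
    simp only [Set.mem_setOf_eq, Set.mem_Ioi]
    constructor
    · intro h
      have h0 : 0 < (Δ / σ) * (z - t) := by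
        rw [← hid z]; linarith
      rcases mul_pos_iff.mp h0 with ⟨_, h2⟩ | ⟨h1, _⟩
      · linarith
      · exact absurd hq (by linarith)
    · intro h
      have h0 : 0 < (Δ / σ) * (z - t) := mul_pos hq (by linarith)
      rw [← hid z] at h0; linarith
  rw [hset]
  refine (gaussian_tail_le t ht0).trans (ENNReal.ofReal_le_ofReal ?_)
  -- show the tail bound is ≤ δ
  have h1t : 1 ≤ t * Real.sqrt (2 * Real.pi) := by
    have hs : Real.sqrt 1 ≤ Real.sqrt (2 * L) * Real.sqrt (2 * Real.pi) := by
      rw [← Real.sqrt_mul (by positivity)]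
      apply Real.sqrt_le_sqrt
      nlinarith [Real.pi_gt_three]
    have hs2 : Real.sqrt (2 * L) * Real.sqrt (2 * Real.pi) ≤ t * Real.sqrt (2 * Real.pi) :=
      mul_le_mul_of_nonneg_right ht (Real.sqrt_nonneg _)
    calc (1:ℝ) = Real.sqrt 1 := Real.sqrt_one.symm
      _ ≤ _ := hs.trans hs2
  calc (Real.sqrt (2 * Real.pi))⁻¹ * (Real.exp (-(t ^ 2) / 2) / t)
      = Real.exp (-(t ^ 2) / 2) / (t * Real.sqrt (2 * Real.pi)) := by
        rw [inv_mul_eq_div, div_div]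
    _ ≤ Real.exp (-(t ^ 2) / 2) / 1 :=
        div_le_div_of_nonneg_left (Real.exp_pos _).le one_pos h1t
    _ = Real.exp (-(t ^ 2) / 2) := div_one _
    _ ≤ δ := by
        rw [show -(t ^ 2) / 2 = -(1 / 2) * t ^ 2 by ring]
        exact part1
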